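/- Suppose M is a transitive model of ATR₀^set plus V=L plus the complete theory Th(L_γ), where every element of L_γ is parameter-free definable in L_γ. Then M = L_δ for some δ ≥ γ. -/

import Mathlib

open FirstOrder Language

namespace BetaRank

abbrev ZFS : Type 1 := ZFSet.{0}
abbrev Ord0 : Type 1 := Ordinal.{0}

abbrev Sent : Type := Language.graph.Sentence
abbrev Fml (n : ℕ) : Type := Language.graph.Formula (Fin n)

/-- The ∈-structure on a class (set) of ZF sets. -/
def structC (A : Set ZFS) : Language.graph.Structure ↥A where
  RelMap | .adj => fun x => (x 0).1 ∈ (x 1).1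

/-- Satisfaction of a sentence in a class of ZF sets with the true membership relation. -/
def SatC (A : Set ZFS) (σ : Sent) : Prop :=
  @Sentence.Realize Language.graph ↥A (structC A) σ

/-- Satisfaction of a theory. -/
def SatT (A : Set ZFS) (T : Set Sent) : Prop := ∀ σ ∈ T, SatC A σ

/-- The complete first-order theory of a class of ZF sets. -/
def ThC (A : Set ZFS) : Set Sent := { σ | SatC A σ }

/-- Realization of a formula with free variables in a class of ZF sets. -/
def FRealize (A : Set ZFS) {n : ℕ} (φ : Fml n) (v : Fin n → ↥A) : Prop :=
  @Formula.Realize Language.graph ↥A (structC A) _ φ v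

/-- Realization of a bounded formula (all variables among the `n` bound slots). -/
def BRealize (A : Set ZFS) {n : ℕ} (φ : Language.graph.BoundedFormula Empty n)
    (xs : Fin n → ↥A) : Prop :=
  @BoundedFormula.Realize Language.graph ↥A (structC A) _ _ φ Empty.elim xs

/-- Satisfaction over (the members of) a single ZF set with the true membership relation. -/
def SatZ (M : ZFS) (σ : Sent) : Prop := SatC M.toSet σ

def SatZT (M : ZFS) (T : Set Sent) : Prop := ∀ σ ∈ T, SatZ M σ

/-- A transitive (set) model of a theory: the formal rendering of a β-model of set theory. -/
def TransModel (M : ZFS) (T : Set Sent) : Prop := M.IsTransitive ∧ SatZT M T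

/-- The first-order definable subsets (with parameters) of a class of ZF sets. -/
def defSub (A : Set ZFS) : Set ZFS :=
  { y | (∀ z ∈ y, z ∈ A) ∧ ∃ (k : ℕ) (φ : Fml (k + 1)) (p : Fin k → ↥A),
      ∀ z : ZFS, z ∈ y ↔ ∃ h : z ∈ A, FRealize A φ (Fin.cons ⟨z, h⟩ p) }

/-- The constructible hierarchy, as classes of ZF sets. -/
noncomputable def Lv (α : Ord0) : Set ZFS :=
  Ordinal.limitRecOn α ∅ (fun _ ih => defSub ih)
    (fun o _ ih => { x | ∃ β, ∃ h : β < o, x ∈ ih β h })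

/-- The class L of constructible sets. -/
noncomputable def Lclass : Set ZFS := { x | ∃ α, x ∈ Lv α }

/-- `A` is a fully elementary subclass of `B` (with respect to ∈). -/
def ElemIn (A B : Set ZFS) : Prop :=
  A ⊆ B ∧ ∀ (n : ℕ) (φ : Fml n) (v : Fin n → ZFS) (hA : ∀ i, v i ∈ A) (hB : ∀ i, v i ∈ B),
    FRealize A φ (fun i => ⟨v i, hA i⟩) ↔ FRealize B φ (fun i => ⟨v i, hB i⟩)

/-- `σ̂(α)`: the least `σ` with `L_σ ≺ L_α`. -/
noncomputable def sigmaHat (α : Ord0) : Ord0 := sInf { σ | ElemIn (Lv σ) (Lv α) }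

/-- Δ₀ (bounded) formulas in the language of set theory. -/
inductive IsDelta0 : ∀ {α : Type} {n : ℕ}, Language.graph.BoundedFormula α n → Prop
  | falsum {α n} : IsDelta0 (BoundedFormula.falsum : Language.graph.BoundedFormula α n)
  | equal {α n} (t u : Language.graph.Term (α ⊕ Fin n)) : IsDelta0 (Term.bdEqual t u)
  | rel {α n l} (R : Language.graph.Relations l)
      (ts : Fin l → Language.graph.Term (α ⊕ Fin n)) : IsDelta0 (BoundedFormula.rel R ts)
  | imp {α n} {φ ψ : Language.graph.BoundedFormula α n} :
      IsDelta0 φ → IsDelta0 ψ → IsDelta0 (φ.imp ψ)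
  | ball {α n} (t : Language.graph.Term (α ⊕ Fin n))
      {φ : Language.graph.BoundedFormula α (n + 1)} : IsDelta0 φ →
      IsDelta0 ((BoundedFormula.imp
        (Language.adj.boundedFormula₂ (Term.var (Sum.inr (Fin.last n))) (t.liftAt 1 n)) φ).all)

/-- Σ₁ formulas: existential quantifiers in front of a Δ₀ matrix. -/
inductive IsSigma1 : ∀ {α : Type} {n : ℕ}, Language.graph.BoundedFormula α n → Prop
  | of_delta0 {α n} {φ : Language.graph.BoundedFormula α n} : IsDelta0 φ → IsSigma1 φ
  | ex {α n} {φ : Language.graph.BoundedFormula α (n + 1)} : IsSigma1 φ → IsSigma1 φ.ex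

/-- Δ₀-collection holds in the class `A`. -/
def Delta0Collection (A : Set ZFS) : Prop :=
  ∀ (n : ℕ) (φ : Language.graph.BoundedFormula Empty (n + 2)), IsDelta0 φ →
    ∀ (p : Fin n → ↥A) (a : ↥A),
      (∀ x : ↥A, x.1 ∈ a.1 → ∃ y : ↥A, BRealize A φ (Fin.snoc (Fin.snoc p x) y)) →
      ∃ b : ↥A, ∀ x : ↥A, x.1 ∈ a.1 →
        ∃ y : ↥A, y.1 ∈ b.1 ∧ BRealize A φ (Fin.snoc (Fin.snoc p x) y)

/-- Full first-order collection holds in the class `A`. -/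
def FullCollection (A : Set ZFS) : Prop :=
  ∀ (n : ℕ) (φ : Language.graph.BoundedFormula Empty (n + 2)),
    ∀ (p : Fin n → ↥A) (a : ↥A),
      (∀ x : ↥A, x.1 ∈ a.1 → ∃ y : ↥A, BRealize A φ (Fin.snoc (Fin.snoc p x) y)) →
      ∃ b : ↥A, ∀ x : ↥A, x.1 ∈ a.1 →
        ∃ y : ↥A, y.1 ∈ b.1 ∧ BRealize A φ (Fin.snoc (Fin.snoc p x) y)

/-- An ordinal is admissible iff it is a limit and `L_α` satisfies Δ₀-collection. -/
def AdmissibleOrd (α : Ord0) : Prop := Order.IsSuccLimit α ∧ Delta0Collection (Lv α)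

/-- `ξ` is a limit of admissible ordinals. -/
def LimitOfAdmissibles (ξ : Ord0) : Prop :=
  0 < ξ ∧ ∀ γ < ξ, ∃ δ, γ < δ ∧ δ < ξ ∧ AdmissibleOrd δ

/-- `ξ` is locally countable: `L_ξ` satisfies "every set is countable". -/
def LocCtbl (ξ : Ord0) : Prop :=
  ∀ x ∈ Lv ξ, ∃ f ∈ Lv ξ, ZFSet.IsFunc x ZFSet.omega f ∧
    ∀ z w u : ZFS, z.pair u ∈ f → w.pair u ∈ f → z = w

/-- Every element of `A` is definable in `(A, ∈)` without parameters. -/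
def PointwiseDefinable (A : Set ZFS) : Prop :=
  ∀ x : ↥A, ∃ φ : Fml 1, ∀ y : ↥A, FRealize A φ ![y] ↔ y = x

/-- A set is (like) a von Neumann ordinal. -/
def IsVN (x : ZFS) : Prop := x.IsOrdinal

/-- The von Neumann natural numbers as ZF sets. -/
def numZF : ℕ → ZFS := fun n => Nat.rec ∅ (fun _ ih => insert ih ih) n

/-- f is a set of ordered pairs which is single-valued. -/
def IsFunLike (f : ZFS) : Prop :=
  (∀ p ∈ f, ∃ x y : ZFS, p = x.pair y) ∧
    ∀ x y₁ y₂ : ZFS, x.pair y₁ ∈ f → x.pair y₂ ∈ f → y₁ = y₂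

/-- `x` is in the field of the relation `r`. -/
def InFld (r x : ZFS) : Prop := ∃ y : ZFS, x.pair y ∈ r ∨ y.pair x ∈ r

/-- `f` is the Mostowski collapsing function of the relation `r`:
`dom f = field r` and `f(x) = { f(y) : (y,x) ∈ r }`. -/
def IsCollapsing (f r : ZFS) : Prop :=
  IsFunLike f ∧ (∀ x : ZFS, (∃ y, x.pair y ∈ f) ↔ InFld r x) ∧
    ∀ x v : ZFS, x.pair v ∈ f → ∀ b : ZFS, b ∈ v ↔ ∃ y : ZFS, y.pair x ∈ r ∧ y.pair b ∈ f

/-- `r` is a regular relation from the point of view of `M`: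
every nonempty set in `M` has an `r`-minimal element. -/
def RegularIn (M r : ZFS) : Prop :=
  ∀ u ∈ M, u ≠ ∅ → ∃ x ∈ u, ∀ y ∈ u, y.pair x ∉ r

/-- The axiom Beta holds in `M`: every regular relation in `M` has a collapsing function in `M`. -/
def BetaIn (M : ZFS) : Prop := ∀ r ∈ M, RegularIn M r → ∃ f ∈ M, IsCollapsing f r

/-- An `L_∈`-structure coded by a pair of ZF sets (domain, membership relation). -/
def structP (m e : ZFS) : Language.graph.Structure ↥m.toSet where
  RelMap | .adj => fun x => ZFSet.pair (x 0).1 (x 1).1 ∈ e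

def SatP (m e : ZFS) (T : Set Sent) : Prop :=
  ∀ σ ∈ T, @Sentence.Realize Language.graph ↥m.toSet (structP m e) σ

/-- The pair `(m, e)` is a well-founded `L_∈`-structure. -/
def WFPair (m e : ZFS) : Prop :=
  (∀ p ∈ e, ∃ x ∈ m, ∃ y ∈ m, p = x.pair y) ∧
    WellFounded (fun x y : ↥m.toSet => ZFSet.pair x.1 y.1 ∈ e)

/-- A well-founded coded model of the theory `T`. -/
def WFModelP (m e : ZFS) (T : Set Sent) : Prop := WFPair m e ∧ SatP m e T

/-!
Pointwise definability turns the transfer of `Th(L_γ)` into an `∈`-preserving map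
`j : L_γ → M`: send `x` to a witness in `M` of the formula defining `x`; the sentence
"whatever satisfies the definition of `x` is a member of whatever satisfies that of `y`"
holds in `L_γ` whenever `x ∈ y`, hence in `M`. An `∈`-preserving map on a transitive class
does not lower ranks, and `L_γ` contains sets of every rank below `γ` (the set `L_ξ` itself
lies in `L_{ξ+1}`), while all ranks in `M = L_δ` are below `δ`.
-/

section Satisfaction

variable {A : Set ZFS}

lemma frealize_relabel {m n : ℕ} (φ : Fml m) (g : Fin m → Fin n) (v : Fin n → ↥A) :
    FRealize A (φ.relabel g) v ↔ FRealize A φ (v ∘ g) := by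
  let := structC A
  exact Formula.realize_relabel

lemma frealize_imp {n : ℕ} (φ ψ : Fml n) (v : Fin n → ↥A) :
    FRealize A (φ.imp ψ) v ↔ (FRealize A φ v → FRealize A ψ v) := by
  let := structC A
  exact Formula.realize_imp

def memF : Fml 2 := Language.adj.formula₂ (Term.var 0) (Term.var 1)

lemma frealize_memF (v : Fin 2 → ↥A) : FRealize A memF v ↔ (v 0).1 ∈ (v 1).1 := by
  let := structC A
  exact Formula.realize_rel₂

noncomputable def allsSent {n : ℕ} (φ : Fml n) : Sent :=
  (BoundedFormula.relabel Sum.inr φ : Language.graph.BoundedFormula Empty n).alls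

noncomputable def exsSent {n : ℕ} (φ : Fml n) : Sent :=
  (BoundedFormula.relabel Sum.inr φ : Language.graph.BoundedFormula Empty n).exs

lemma satC_allsSent {n : ℕ} (φ : Fml n) : SatC A (allsSent φ) ↔ ∀ v, FRealize A φ v := by
  let := structC A
  unfold SatC Sentence.Realize Formula.Realize allsSent
  refine BoundedFormula.realize_alls.trans ?_
  exact forall_congr' fun v => Formula.realize_relabel_sumInr (M := ↥A) φ

lemma satC_exsSent {n : ℕ} (φ : Fml n) : SatC A (exsSent φ) ↔ ∃ v, FRealize A φ v := by
  let := structC A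
  unfold SatC Sentence.Realize Formula.Realize exsSent
  refine BoundedFormula.realize_exs.trans ?_
  exact exists_congr fun v => Formula.realize_relabel_sumInr (M := ↥A) φ

end Satisfaction

section Transfer

variable {A B : Set ZFS}

noncomputable def definedMemF (φ ψ : Fml 1) : Fml 2 :=
  (φ.relabel ![0]).imp ((ψ.relabel ![1]).imp memF)

lemma frealize_definedMemF (φ ψ : Fml 1) (v : Fin 2 → ↥A) :
    FRealize A (definedMemF φ ψ) v ↔
      (FRealize A φ ![v 0] → FRealize A ψ ![v 1] → (v 0).1 ∈ (v 1).1) := by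
  simp only [definedMemF, frealize_imp, frealize_relabel, frealize_memF, Matrix.cons_fin_one]
  rfl

lemma PointwiseDefinable.exists_mem_preserving (hA : PointwiseDefinable A)
    (hAB : ∀ σ, SatC A σ → SatC B σ) :
    ∃ j : ↥A → ↥B, ∀ x y : ↥A, x.1 ∈ y.1 → (j x).1 ∈ (j y).1 := by
  choose φ hφ using hA
  have hwitness : ∀ x, ∃ w : ↥B, FRealize B (φ x) ![w] := by
    intro x
    have hxA : SatC A (exsSent (φ x)) := (satC_exsSent _).2 ⟨![x], (hφ x x).2 rfl⟩
    obtain ⟨v, hv⟩ := (satC_exsSent _).1 (hAB _ hxA)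
    refine ⟨v 0, ?_⟩
    rwa [Matrix.cons_fin_one, ← funext fun i => congrArg v (Subsingleton.elim i 0)]
  choose j hj using hwitness
  refine ⟨j, fun x y hxy => ?_⟩
  have hxyA : SatC A (allsSent (definedMemF (φ x) (φ y))) := by
    refine (satC_allsSent _).2 fun v => (frealize_definedMemF _ _ v).2 fun hv₀ hv₁ => ?_
    rwa [(hφ x _).1 hv₀, (hφ y _).1 hv₁]
  exact (frealize_definedMemF _ _ _).1 ((satC_allsSent _).1 (hAB _ hxyA) ![j x, j y])
    (hj x) (hj y)

end Transfer

def IsTransitiveClass (A : Set ZFS) : Prop := ∀ x ∈ A, ∀ z ∈ x, z ∈ A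

lemma rank_le_rank_of_mem_preserving {A : Set ZFS} (hA : IsTransitiveClass A)
    (j : ↥A → ZFS) (hj : ∀ x y : ↥A, x.1 ∈ y.1 → j x ∈ j y) (x : ↥A) :
    ZFSet.rank x.1 ≤ ZFSet.rank (j x) := by
  obtain ⟨x, hx⟩ := x
  induction x using ZFSet.mem_wf.induction with
  | _ x ih =>
    refine ZFSet.rank_le_iff.2 fun z hz => ?_
    have hzA : z ∈ A := hA x hx z hz
    exact (ih z hz hzA).trans_lt (ZFSet.rank_lt_of_mem (hj ⟨z, hzA⟩ ⟨x, hx⟩ hz))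

lemma Lv_zero : Lv 0 = ∅ := by
  rw [Lv, Ordinal.limitRecOn_zero]

lemma Lv_succ (α : Ord0) : Lv (Order.succ α) = defSub (Lv α) := by
  rw [Order.succ_eq_add_one, Lv, Ordinal.limitRecOn_add_one]
  rfl

lemma mem_Lv_of_isSuccLimit {α : Ord0} (h : Order.IsSuccLimit α) {x : ZFS} :
    x ∈ Lv α ↔ ∃ β < α, x ∈ Lv β := by
  rw [Lv, Ordinal.limitRecOn_limit _ _ _ _ h]
  simp only [exists_prop]
  rfl

lemma subset_defSub {A : Set ZFS} (hA : IsTransitiveClass A) : A ⊆ defSub A := by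
  intro x hx
  refine ⟨hA x hx, 1, memF, ![⟨x, hx⟩], fun z => ⟨fun hz => ⟨hA x hx z hz, ?_⟩, ?_⟩⟩
  · exact (frealize_memF _).2 hz
  · rintro ⟨_, hz⟩
    exact (frealize_memF _).1 hz

lemma mem_defSub_of_toSet_eq {A : Set ZFS} {S : ZFS} (hS : S.toSet = A) : S ∈ defSub A := by
  subst hS
  refine ⟨fun z hz => hz, 0, ⊤, Fin.elim0, fun z => ⟨fun hz => ⟨hz, ?_⟩, fun ⟨hz, _⟩ => hz⟩⟩
  let := structC S.toSet
  exact Formula.realize_top.2 trivial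

lemma isTransitiveClass_Lv (α : Ord0) : IsTransitiveClass (Lv α) := by
  induction α using WellFoundedLT.induction with
  | _ α ih =>
    rcases Ordinal.zero_or_succ_or_isSuccLimit α with rfl | ⟨β, rfl⟩ | hlim
    · simp [IsTransitiveClass, Lv_zero]
    · rw [Lv_succ]
      intro x hx z hz
      exact subset_defSub (ih β (Order.lt_succ β)) (hx.1 z hz)
    · intro x hx z hz
      obtain ⟨β, hβ, hxβ⟩ := (mem_Lv_of_isSuccLimit hlim).1 hx
      exact (mem_Lv_of_isSuccLimit hlim).2 ⟨β, hβ, ih β hβ x hxβ z hz⟩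

lemma rank_lt_of_mem_Lv {α : Ord0} {x : ZFS} (hx : x ∈ Lv α) : ZFSet.rank x < α := by
  induction α using WellFoundedLT.induction generalizing x with
  | _ α ih =>
    rcases Ordinal.zero_or_succ_or_isSuccLimit α with rfl | ⟨β, rfl⟩ | hlim
    · simp [Lv_zero] at hx
    · rw [Lv_succ] at hx
      refine Order.lt_succ_iff.2 (ZFSet.rank_le_iff.2 fun z hz => ?_)
      exact ih β (Order.lt_succ β) (hx.1 z hz)
    · obtain ⟨β, hβ, hxβ⟩ := (mem_Lv_of_isSuccLimit hlim).1 hx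
      exact (ih β hβ hxβ).trans hβ

lemma exists_toSet_eq_Lv (α : Ord0) : ∃ S : ZFS, S.toSet = Lv α := by
  refine ⟨ZFSet.sep (· ∈ Lv α) (ZFSet.vonNeumann α), Set.ext fun x => ?_⟩
  change x ∈ ZFSet.sep _ _ ↔ _
  rw [ZFSet.mem_sep, ZFSet.mem_vonNeumann, and_iff_right_iff_imp]
  exact rank_lt_of_mem_Lv

lemma exists_mem_Lv_le_rank {α ξ : Ord0} (hξ : ξ < α) : ∃ x ∈ Lv α, ξ ≤ ZFSet.rank x := by
  induction α using WellFoundedLT.induction generalizing ξ with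
  | _ α ih =>
    rcases Ordinal.zero_or_succ_or_isSuccLimit α with rfl | ⟨β, rfl⟩ | hlim
    · exact absurd hξ not_lt_zero
    · obtain ⟨S, hS⟩ := exists_toSet_eq_Lv β
      refine ⟨S, Lv_succ β ▸ mem_defSub_of_toSet_eq hS, ?_⟩
      refine (Order.lt_succ_iff.1 hξ).trans (le_of_forall_lt fun η hη => ?_)
      obtain ⟨z, hz, hηz⟩ := ih β (Order.lt_succ β) hη
      rw [← hS] at hz
      exact hηz.trans_lt (ZFSet.rank_lt_of_mem hz)
    · obtain ⟨x, hx, hξx⟩ := ih _ (hlim.succ_lt hξ) (Order.lt_succ ξ)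
      exact ⟨x, (mem_Lv_of_isSuccLimit hlim).2 ⟨_, hlim.succ_lt hξ, hx⟩, hξx⟩

theorem transitive_model_of_theory_of_L_level_general (γ : Ord0)
    (hpd : PointwiseDefinable (Lv γ))
    (M : ZFS)
    (hVL : ∃ δ : Ord0, M.toSet = Lv δ)
    (hTh : ∀ σ : Sent, SatC (Lv γ) σ → SatZ M σ) :
    ∃ δ : Ord0, γ ≤ δ ∧ M.toSet = Lv δ := by
  obtain ⟨δ, hδ⟩ := hVL
  obtain ⟨j, hj⟩ := hpd.exists_mem_preserving hTh
  refine ⟨δ, le_of_forall_lt fun ξ hξ => ?_, hδ⟩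
  obtain ⟨x, hx, hξx⟩ := exists_mem_Lv_le_rank hξ
  calc ξ ≤ ZFSet.rank x := hξx
    _ ≤ ZFSet.rank (j ⟨x, hx⟩).1 :=
      rank_le_rank_of_mem_preserving (isTransitiveClass_Lv γ) (fun y => (j y).1) hj ⟨x, hx⟩
    _ < δ := rank_lt_of_mem_Lv (hδ ▸ (j ⟨x, hx⟩).2)

/-- suppose `M` is a transitive model of `ATR₀^set` + `V=L` + `Th(L_γ)`, where
every element of `L_γ` is parameter-free definable in `L_γ` (and `γ` is a locally countable
limit of admissibles, so that `L_γ` models `ATR₀^set`).  The hypothesis that `M ⊨ V=L` is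
rendered semantically: `M` is a level of `L`.  Then `M = L_δ` for some `δ ≥ γ`. -/
theorem transitive_model_of_theory_of_L_level (γ : Ord0)
    (hγadm : LimitOfAdmissibles γ) (hγctbl : LocCtbl γ)
    (hpd : PointwiseDefinable (Lv γ))
    (M : ZFS) (hMtrans : M.IsTransitive)
    (hVL : ∃ δ : Ord0, M.toSet = Lv δ)
    (hTh : ∀ σ : Sent, SatC (Lv γ) σ → SatZ M σ) :
    ∃ δ : Ord0, γ ≤ δ ∧ M.toSet = Lv δ :=
  transitive_model_of_theory_of_L_level_general γ hpd M hVL hTh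

end BetaRank
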